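/- arXiv:1511.05504 — 4 statements merged into one kernel-verified Lean document; each statement's English description precedes it below -/
import Mathlib

section
/- Let (X,d) be a metric space and let μ be a doubling Borel measure on X. Let U ⊆ X be an open set and let ν be a finite Borel measure on X. Define A := { x ∈ ∂U : limsup_{r→0⁺} r·ν(B(x,r) ∩ U)/μ(B(x,r)) > 0 }. Then the codimension-1 Hausdorff measure of A is zero; equivalently, for every ε > 0 and every R > 0 there exists a countable family of balls B(x_i, r_i) with 0 < r_i ≤ R whose union contains A and such that Σ_i μ(B(x_i, r_i))/r_i < ε. -/
open MeasureTheory Metric Filter Set Topology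
open scoped ENNReal NNReal

private lemma aux_cover
    {X : Type*} [MetricSpace X] [MeasurableSpace X] [BorelSpace X] [Nonempty X]
    (μ ν : Measure X) (C_d : ℝ≥0∞)
    (hdoub : ∀ (x : X) (r : ℝ), 0 < r →
      0 < μ (ball x (2 * r)) ∧ μ (ball x (2 * r)) ≤ C_d * μ (ball x r) ∧
        C_d * μ (ball x r) < ⊤)
    [IsFiniteMeasure ν]
    (U : Set X) (hU : IsOpen U) (k : ℕ)
    (ε' : ℝ≥0∞) (hε'0 : ε' ≠ 0) (R : ℝ) (hR : 0 < R) :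
    ∃ (ι : Type) (_ : Countable ι) (c : ι → X) (r : ι → ℝ),
      (∀ i, 0 < r i ∧ r i ≤ R) ∧
      {x | x ∈ frontier U ∧ ((k : ℝ≥0∞) + 1)⁻¹ <
          Filter.limsup
            (fun r : ℝ => ENNReal.ofReal r * ν (ball x r ∩ U) / μ (ball x r))
            (𝓝[>] (0 : ℝ))} ⊆ ⋃ i, ball (c i) (r i) ∧
      ∑' i, μ (ball (c i) (r i)) / ENNReal.ofReal (r i) ≤ ε' := by
  set Ak : Set X := {x | x ∈ frontier U ∧ ((k : ℝ≥0∞) + 1)⁻¹ <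
      Filter.limsup
        (fun r : ℝ => ENNReal.ofReal r * ν (ball x r ∩ U) / μ (ball x r))
        (𝓝[>] (0 : ℝ))} with hAk
  classical
  set ν' := ν.restrict U with hν'def
  -- basic facts about μ
  have posfin : ∀ (x : X) (r : ℝ), 0 < r → 0 < μ (ball x r) ∧ μ (ball x r) ≠ ⊤ := by
    intro x r hr
    obtain ⟨h1, h2, h3⟩ := hdoub x (r / 2) (by linarith)
    rw [show 2 * (r / 2) = r by ring] at h1 h2
    exact ⟨h1, (h2.trans_lt h3).ne⟩
  have hCtop : C_d ≠ ⊤ := by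
    intro h
    obtain x0 := Classical.arbitrary X
    obtain ⟨-, -, h3⟩ := hdoub x0 1 one_pos
    have h1 := (posfin x0 1 one_pos).1
    rw [h, ENNReal.top_mul h1.ne'] at h3
    exact lt_irrefl _ h3
  have doub3 : ∀ (x : X) (r : ℝ), 0 < r →
      μ (ball x (8 * r)) ≤ C_d ^ 3 * μ (ball x r) := by
    intro x r hr
    have h4 := (hdoub x (4 * r) (by linarith)).2.1
    have h2 := (hdoub x (2 * r) (by linarith)).2.1
    have h1 := (hdoub x r hr).2.1
    rw [show 2 * (4 * r) = 8 * r by ring] at h4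
    rw [show 2 * (2 * r) = 4 * r by ring] at h2
    calc μ (ball x (8 * r)) ≤ C_d * μ (ball x (4 * r)) := h4
      _ ≤ C_d * (C_d * μ (ball x (2 * r))) := mul_le_mul_right h2 _
      _ ≤ C_d * (C_d * (C_d * μ (ball x r))) :=
          mul_le_mul_right (mul_le_mul_right h1 _) _
      _ = C_d ^ 3 * μ (ball x r) := by ring
  set D : ℝ≥0∞ := C_d ^ 3 * ((k : ℝ≥0∞) + 1) with hD
  have hDtop : D ≠ ⊤ := ENNReal.mul_ne_top (ENNReal.pow_ne_top hCtop) (by simp)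
  set η := ε' / D with hηdef
  have hη0 : 0 < η := ENNReal.div_pos hε'0 hDtop
  -- choose δ
  have hν'F : ν' (frontier U) = 0 := by
    rw [hν'def, Measure.restrict_apply isClosed_frontier.measurableSet]
    have hempty : frontier U ∩ U = ∅ := by
      rw [hU.frontier_eq]
      ext x
      simp only [mem_inter_iff, mem_diff, mem_empty_iff_false, iff_false]
      tauto
    rw [hempty, measure_empty]
  have htend :=
    tendsto_measure_cthickening_of_isClosed (μ := ν') (s := frontier U)
      ⟨1, one_pos, measure_ne_top _ _⟩ isClosed_frontier
  rw [hν'F] at htend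
  have hev : ∀ᶠ d in 𝓝[>] (0 : ℝ), ν' (cthickening d (frontier U)) < η :=
    (htend.mono_left nhdsWithin_le_nhds).eventually_lt_const hη0
  obtain ⟨δ, hδν, hδmem⟩ :=
    (hev.and (Ioo_mem_nhdsGT_of_mem (show (0:ℝ) ∈ Ico (0:ℝ) (R/5) from ⟨le_refl 0, by positivity⟩))).exists
  -- hδmem : δ ∈ Ioo 0 (R / 5)
  -- choose good radii at each point of Ak
  have key : ∀ a : ↥Ak, ∃ p : ℝ, 0 < p ∧ p < δ ∧
      μ (ball (a : X) p) / ENNReal.ofReal p <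
        ((k : ℝ≥0∞) + 1) * ν' (ball (a : X) p) := by
    rintro ⟨x, hxF, hxl⟩
    have freq : ∃ᶠ p in 𝓝[>] (0 : ℝ),
        ((k : ℝ≥0∞) + 1)⁻¹ < ENNReal.ofReal p * ν (ball x p ∩ U) / μ (ball x p) := by
      by_contra hcon
      rw [not_frequently] at hcon
      have hle : Filter.limsup
          (fun r : ℝ => ENNReal.ofReal r * ν (ball x r ∩ U) / μ (ball x r))
          (𝓝[>] (0 : ℝ)) ≤ ((k : ℝ≥0∞) + 1)⁻¹ :=
        limsup_le_of_le (by isBoundedDefault) (hcon.mono fun p hp => not_lt.1 hp)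
      exact absurd hxl (not_lt.2 hle)
    obtain ⟨p, hp, hpmem⟩ :=
      (freq.and_eventually (Ioo_mem_nhdsGT_of_mem ⟨le_refl 0, hδmem.1⟩)).exists
    refine ⟨p, hpmem.1, hpmem.2, ?_⟩
    have hm0 := (posfin x p hpmem.1).1.ne'
    have hmt := (posfin x p hpmem.1).2
    have hr0 : ENNReal.ofReal p ≠ 0 := (ENNReal.ofReal_pos.2 hpmem.1).ne'
    have step1 : ((k : ℝ≥0∞) + 1)⁻¹ * μ (ball x p) <
        ENNReal.ofReal p * ν (ball x p ∩ U) :=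
      (ENNReal.lt_div_iff_mul_lt (Or.inl hm0) (Or.inl hmt)).1 hp
    have hk0 : ((k : ℝ≥0∞) + 1) ≠ 0 := by simp
    have hkt : ((k : ℝ≥0∞) + 1) ≠ ⊤ := by simp
    have step2 : μ (ball x p) <
        ((k : ℝ≥0∞) + 1) * ν (ball x p ∩ U) * ENNReal.ofReal p := by
      have h := (ENNReal.mul_lt_mul_iff_right hk0 hkt).2 step1
      rw [← mul_assoc, ENNReal.mul_inv_cancel hk0 hkt, one_mul] at h
      calc μ (ball x p) < ((k : ℝ≥0∞) + 1) * (ENNReal.ofReal p * ν (ball x p ∩ U)) := h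
        _ = ((k : ℝ≥0∞) + 1) * ν (ball x p ∩ U) * ENNReal.ofReal p := by ring
    rw [hν'def, Measure.restrict_apply measurableSet_ball]
    exact (ENNReal.div_lt_iff (Or.inl hr0) (Or.inl ENNReal.ofReal_ne_top)).2 step2
  choose ρ hρ0 hρδ hρlt using key
  obtain ⟨u, -, hu_disj, hu_cov⟩ :=
    Vitali.exists_disjoint_subfamily_covering_enlargement_closedBall (univ : Set ↥Ak)
      (fun a => (a : X)) ρ δ (fun a _ => (hρδ a).le) 4 (by norm_num)
  -- positivity of ν' on the chosen balls
  have hνpos : ∀ a : ↥Ak, 0 < ν' (ball (a : X) (ρ a)) := by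
    intro a
    by_contra h
    rw [not_lt, nonpos_iff_eq_zero] at h
    have hlt := hρlt a
    rw [h, mul_zero] at hlt
    exact (not_lt.2 zero_le) hlt
  -- countability of u
  have hu_cnt : u.Countable := by
    have hcnt := MeasureTheory.Measure.countable_meas_pos_of_disjoint_iUnion (μ := ν')
      (As := fun a : ↥Ak => if a ∈ u then ball (a : X) (ρ a) else ∅)
      (fun a => by
        by_cases ha : a ∈ u
        · simp only [if_pos ha]; exact measurableSet_ball
        · simp only [if_neg ha]; exact MeasurableSet.empty)
      (by
        intro a b hab
        by_cases ha : a ∈ u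
        · by_cases hb : b ∈ u
          · simp only [Function.onFun, if_pos ha, if_pos hb]
            exact (hu_disj ha hb hab).mono ball_subset_closedBall ball_subset_closedBall
          · simp only [Function.onFun, if_neg hb]
            exact disjoint_empty _
        · simp only [Function.onFun, if_neg ha]
          exact empty_disjoint _)
    refine hcnt.mono fun a ha => ?_
    simp only [mem_setOf_eq, if_pos ha]
    exact hνpos a
  haveI : Countable ↥u := hu_cnt.to_subtype
  -- per-ball estimate
  have hball : ∀ b : ↥u,
      μ (ball ((b : ↥Ak) : X) (5 * ρ (b : ↥Ak))) / ENNReal.ofReal (5 * ρ (b : ↥Ak)) ≤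
        D * ν' (ball ((b : ↥Ak) : X) (ρ (b : ↥Ak))) := by
    intro b
    set x : X := ((b : ↥Ak) : X) with hx
    set p : ℝ := ρ (b : ↥Ak) with hp
    have hp0 : 0 < p := hρ0 _
    have h58 : μ (ball x (5 * p)) ≤ μ (ball x (8 * p)) :=
      measure_mono (ball_subset_ball (by linarith))
    have hof : ENNReal.ofReal p ≤ ENNReal.ofReal (5 * p) :=
      ENNReal.ofReal_le_ofReal (by linarith)
    calc μ (ball x (5 * p)) / ENNReal.ofReal (5 * p)
        ≤ C_d ^ 3 * μ (ball x p) / ENNReal.ofReal p :=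
          ENNReal.div_le_div (h58.trans (doub3 x p hp0)) hof
      _ = C_d ^ 3 * (μ (ball x p) / ENNReal.ofReal p) := by
          rw [div_eq_mul_inv, div_eq_mul_inv, mul_assoc]
      _ ≤ C_d ^ 3 * (((k : ℝ≥0∞) + 1) * ν' (ball x p)) :=
          mul_le_mul_right (hρlt _).le _
      _ = D * ν' (ball x p) := by rw [hD]; ring
  -- disjointness of the selected open balls
  have hdisj : Pairwise (Function.onFun Disjoint
      fun b : ↥u => ball ((b : ↥Ak) : X) (ρ (b : ↥Ak))) := by
    intro b b' hbb'
    have h1 : (b : ↥Ak) ≠ (b' : ↥Ak) := fun h => hbb' (Subtype.ext h)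
    exact (hu_disj b.2 b'.2 h1).mono ball_subset_closedBall ball_subset_closedBall
  -- the sum estimate over u
  have hsum : ∑' b : ↥u,
      μ (ball ((b : ↥Ak) : X) (5 * ρ (b : ↥Ak))) / ENNReal.ofReal (5 * ρ (b : ↥Ak)) ≤ ε' := by
    calc ∑' b : ↥u,
        μ (ball ((b : ↥Ak) : X) (5 * ρ (b : ↥Ak))) / ENNReal.ofReal (5 * ρ (b : ↥Ak))
        ≤ ∑' b : ↥u, D * ν' (ball ((b : ↥Ak) : X) (ρ (b : ↥Ak))) :=
          ENNReal.tsum_le_tsum hball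
      _ = D * ∑' b : ↥u, ν' (ball ((b : ↥Ak) : X) (ρ (b : ↥Ak))) := ENNReal.tsum_mul_left
      _ ≤ D * ν' (⋃ b : ↥u, ball ((b : ↥Ak) : X) (ρ (b : ↥Ak))) :=
          mul_le_mul_right
            (tsum_meas_le_meas_iUnion_of_disjoint _ (fun _ => measurableSet_ball) hdisj) _
      _ ≤ D * ν' (cthickening δ (frontier U)) := by
          refine mul_le_mul_right (measure_mono ?_) _
          refine iUnion_subset fun b => ?_
          have hbF : ((b : ↥Ak) : X) ∈ frontier U := (b : ↥Ak).2.1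
          refine (ball_subset_closedBall.trans
              (closedBall_subset_closedBall (hρδ _).le)).trans ?_
          exact closedBall_subset_cthickening hbF δ
      _ ≤ D * η := mul_le_mul_right hδν.le _
      _ ≤ ε' := by rw [hηdef]; exact ENNReal.mul_div_le
  -- coverage
  have hcov : Ak ⊆ ⋃ b : ↥u, ball ((b : ↥Ak) : X) (5 * ρ (b : ↥Ak)) := by
    intro x hx
    obtain ⟨b, hb, hsub⟩ := hu_cov ⟨x, hx⟩ (mem_univ _)
    refine mem_iUnion.2 ⟨⟨b, hb⟩, ?_⟩
    have hxb : x ∈ closedBall (b : X) (4 * ρ b) :=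
      hsub (mem_closedBall_self (hρ0 _).le)
    have hbp := hρ0 b
    exact closedBall_subset_ball (by linarith) hxb
  -- repackage with an index type in `Type 0`
  obtain ⟨f, hf⟩ := exists_injective_nat ↥u
  let e : ↥u ≃ ↥(Set.range f) := Equiv.ofInjective f hf
  refine ⟨↥(Set.range f), inferInstance,
    fun n => ((e.symm n : ↥Ak) : X), fun n => 5 * ρ (e.symm n : ↥Ak), ?_, ?_, ?_⟩
  · intro n
    have h0 := hρ0 (e.symm n : ↥Ak)
    have h1 := hρδ (e.symm n : ↥Ak)
    have h2 := hδmem.2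
    constructor
    · show (0:ℝ) < 5 * ρ (e.symm n : ↥Ak)
      linarith
    · show 5 * ρ (e.symm n : ↥Ak) ≤ R
      linarith
  · intro x hx
    rcases mem_iUnion.1 (hcov hx) with ⟨b, hb⟩
    refine mem_iUnion.2 ⟨e b, ?_⟩
    show x ∈ ball (((e.symm (e b) : ↥u) : ↥Ak) : X) (5 * ρ ((e.symm (e b) : ↥u) : ↥Ak))
    rw [Equiv.symm_apply_apply]
    exact hb
  · calc ∑' n : ↥(Set.range f),
        μ (ball ((e.symm n : ↥Ak) : X) (5 * ρ (e.symm n : ↥Ak))) /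
          ENNReal.ofReal (5 * ρ (e.symm n : ↥Ak))
        = ∑' b : ↥u,
          μ (ball ((b : ↥Ak) : X) (5 * ρ (b : ↥Ak))) /
            ENNReal.ofReal (5 * ρ (b : ↥Ak)) :=
          e.symm.tsum_eq (fun b : ↥u =>
            μ (ball ((b : ↥Ak) : X) (5 * ρ (b : ↥Ak))) / ENNReal.ofReal (5 * ρ (b : ↥Ak)))
      _ ≤ ε' := hsum

/-- If `μ` is a doubling Borel measure on a metric space `X`, `U` is open,
`ν` is a finite Borel measure, and `A` is the set of points of the boundary of `U` where
`limsup_{r→0⁺} r·ν(B(x,r)∩U)/μ(B(x,r)) > 0`, then the codimension-1 Hausdorff measure of `A`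
vanishes: for all `ε > 0` and `R > 0` there is a countable family of balls of radii at most `R`
covering `A` with `∑ μ(B(xᵢ,rᵢ))/rᵢ < ε`. -/
theorem codim_one_measure_zero_of_limsup_pos
    {X : Type*} [MetricSpace X] [MeasurableSpace X] [BorelSpace X]
    (μ ν : Measure X) (C_d : ℝ≥0∞) (hC_d : 1 ≤ C_d)
    (hdoub : ∀ (x : X) (r : ℝ), 0 < r →
      0 < μ (ball x (2 * r)) ∧ μ (ball x (2 * r)) ≤ C_d * μ (ball x r) ∧
        C_d * μ (ball x r) < ⊤)
    [IsFiniteMeasure ν]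
    (U : Set X) (hU : IsOpen U)
    (A : Set X)
    (hA : A = {x | x ∈ frontier U ∧
      0 < Filter.limsup
        (fun r : ℝ => ENNReal.ofReal r * ν (ball x r ∩ U) / μ (ball x r))
        (𝓝[>] (0 : ℝ))})
    (ε : ℝ≥0∞) (hε : 0 < ε) (R : ℝ) (hR : 0 < R) :
    ∃ (ι : Type) (_ : Countable ι) (c : ι → X) (r : ι → ℝ),
      (∀ i, 0 < r i ∧ r i ≤ R) ∧
      A ⊆ ⋃ i, ball (c i) (r i) ∧
      ∑' i, μ (ball (c i) (r i)) / ENNReal.ofReal (r i) < ε := by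
  rcases isEmpty_or_nonempty X with hX | hX
  · refine ⟨Empty, inferInstance, fun i => i.elim, fun i => i.elim,
      fun i => i.elim, fun x _ => (IsEmpty.false x).elim, ?_⟩
    simpa using hε
  · set ε' := min ε 1 with hε'def
    have hε'0 : ε' ≠ 0 := (lt_min hε one_pos).ne'
    have hε't : ε' ≠ ⊤ := ((min_le_right _ _).trans_lt ENNReal.one_lt_top).ne
    have haux : ∀ k : ℕ, ∃ (ι : Type) (_ : Countable ι) (c : ι → X) (r : ι → ℝ),
        (∀ i, 0 < r i ∧ r i ≤ R) ∧
        {x | x ∈ frontier U ∧ ((k : ℝ≥0∞) + 1)⁻¹ <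
            Filter.limsup
              (fun r : ℝ => ENNReal.ofReal r * ν (ball x r ∩ U) / μ (ball x r))
              (𝓝[>] (0 : ℝ))} ⊆ ⋃ i, ball (c i) (r i) ∧
        ∑' i, μ (ball (c i) (r i)) / ENNReal.ofReal (r i) ≤ ε' * 2⁻¹ ^ (k + 2) := by
      intro k
      refine aux_cover μ ν C_d hdoub U hU k _ ?_ R hR
      exact mul_ne_zero hε'0 (pow_ne_zero _ (by simp))
    choose ι hι c r h1 h2 h3 using haux
    haveI : ∀ k, Countable (ι k) := hι
    refine ⟨Σ k, ι k, inferInstance, fun p => c p.1 p.2, fun p => r p.1 p.2,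
      fun p => h1 p.1 p.2, ?_, ?_⟩
    · intro x hx
      rw [hA] at hx
      obtain ⟨hxF, hxpos⟩ := hx
      obtain ⟨n, hn⟩ := ENNReal.exists_inv_nat_lt hxpos.ne'
      have hx' : x ∈ {x | x ∈ frontier U ∧ ((n : ℝ≥0∞) + 1)⁻¹ <
          Filter.limsup
            (fun r : ℝ => ENNReal.ofReal r * ν (ball x r ∩ U) / μ (ball x r))
            (𝓝[>] (0 : ℝ))} :=
        ⟨hxF, lt_of_le_of_lt (ENNReal.inv_le_inv' le_self_add) hn⟩
      rcases mem_iUnion.1 (h2 n hx') with ⟨i, hi⟩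
      exact mem_iUnion.2 ⟨⟨n, i⟩, hi⟩
    · have hgeo : ∑' k : ℕ, ε' * 2⁻¹ ^ (k + 2) = ε' * 2⁻¹ := by
        rw [ENNReal.tsum_mul_left]
        congr 1
        have hre : ∀ k : ℕ, (2⁻¹ : ℝ≥0∞) ^ (k + 2) = 2⁻¹ ^ 2 * 2⁻¹ ^ k := fun k => by
          rw [pow_add, mul_comm]
        rw [tsum_congr hre, ENNReal.tsum_mul_left, ENNReal.tsum_geometric]
        rw [ENNReal.one_sub_inv_two, inv_inv]
        rw [pow_two, mul_assoc, ENNReal.inv_mul_cancel two_ne_zero ENNReal.ofNat_ne_top, mul_one]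
      calc ∑' p : Σ k, ι k, μ (ball (c p.1 p.2) (r p.1 p.2)) / ENNReal.ofReal (r p.1 p.2)
          = ∑' k, ∑' i, μ (ball (c k i) (r k i)) / ENNReal.ofReal (r k i) :=
            ENNReal.tsum_sigma' _
        _ ≤ ∑' k : ℕ, ε' * 2⁻¹ ^ (k + 2) := ENNReal.tsum_le_tsum h3
        _ = ε' * 2⁻¹ := hgeo
        _ < ε' := by
            rw [← div_eq_mul_inv]
            · exact ENNReal.half_lt_self hε'0 hε't
        _ ≤ ε := min_le_left _ _
end

section
/- Let (X,d) be a metric space, let μ be a doubling Borel measure on X with doubling constant C_d, let ν be a finite Borel measure on X, and let a > 0 and 0 < R < ∞. Define G := { x ∈ X : there exists r ∈ (0,R] with r·ν(B(x,r))/μ(B(x,r)) > a }. Then there is a constant C depending only on C_d such that the codimension-1 Hausdorff content at scale 5R satisfies H_{5R}(G) ≤ C·ν(X)/a. -/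
open MeasureTheory Metric Filter Set Topology
open scoped ENNReal NNReal

/-- Weak-type estimate for the restricted fractional maximal function of a
finite measure `ν` with respect to a doubling measure `μ`: the codimension-1 Hausdorff content
at scale `5R` of the set `G = {x : ∃ r ∈ (0,R], r·ν(B(x,r))/μ(B(x,r)) > a}` is at most
`C·ν(X)/a`, where `C` depends only on the doubling constant `C_d`. -/
theorem content_maximal_estimate (C_d : ℝ≥0∞) (hC_d : 1 ≤ C_d) :
    ∃ C : ℝ≥0∞, 0 < C ∧ C < ⊤ ∧
      ∀ (X : Type) [MetricSpace X] [MeasurableSpace X] [BorelSpace X]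
        (μ ν : Measure X),
        (∀ (x : X) (r : ℝ), 0 < r →
          0 < μ (ball x (2 * r)) ∧ μ (ball x (2 * r)) ≤ C_d * μ (ball x r) ∧
            C_d * μ (ball x r) < ⊤) →
        IsFiniteMeasure ν →
        ∀ (a R : ℝ), 0 < a → 0 < R →
          sInf {s : ℝ≥0∞ | ∃ (ι : Type) (_ : Countable ι) (c : ι → X) (r : ι → ℝ),
              (∀ i, 0 < r i ∧ r i ≤ 5 * R) ∧
              {x : X | ∃ r' : ℝ, 0 < r' ∧ r' ≤ R ∧
                  ENNReal.ofReal a < ENNReal.ofReal r' * ν (ball x r') / μ (ball x r')}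
                ⊆ ⋃ i, ball (c i) (r i) ∧
              s = ∑' i, μ (ball (c i) (r i)) / ENNReal.ofReal (r i)}
            ≤ C * ν Set.univ / ENNReal.ofReal a := by
  rcases eq_top_or_lt_top C_d with htop | hlt
  · -- degenerate case: the doubling hypothesis forces `X` empty
    refine ⟨1, one_pos, ENNReal.one_lt_top, ?_⟩
    intro X _ _ _ μ ν h hfin a R ha hR
    rcases isEmpty_or_nonempty X with hX | hX
    · have hmem : (0 : ℝ≥0∞) ∈ {s : ℝ≥0∞ | ∃ (ι : Type) (_ : Countable ι) (c : ι → X)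
          (r : ι → ℝ), (∀ i, 0 < r i ∧ r i ≤ 5 * R) ∧
          {x : X | ∃ r' : ℝ, 0 < r' ∧ r' ≤ R ∧
              ENNReal.ofReal a < ENNReal.ofReal r' * ν (ball x r') / μ (ball x r')}
            ⊆ ⋃ i, ball (c i) (r i) ∧
          s = ∑' i, μ (ball (c i) (r i)) / ENNReal.ofReal (r i)} := by
        refine ⟨Empty, inferInstance, fun i => i.elim, fun i => i.elim,
          fun i => i.elim, ?_, by simp⟩
        intro x _
        exact isEmptyElim x
      exact le_trans (sInf_le hmem) (zero_le)
    · exfalso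
      obtain ⟨x⟩ := hX
      have h1 := (h x (1 / 2) (by norm_num)).1
      have h2 := (h x 1 one_pos).2.2
      have he : (2 : ℝ) * (1 / 2) = 1 := by norm_num
      rw [he] at h1
      rw [htop, ENNReal.top_mul h1.ne'] at h2
      exact lt_irrefl _ h2
  · -- main case
    refine ⟨C_d ^ 2, ENNReal.pow_pos (zero_lt_one.trans_le hC_d) 2, ENNReal.pow_lt_top hlt, ?_⟩
    intro X _ _ _ μ ν h hfin a R ha hR
    haveI := hfin
    set G : Set X := {x : X | ∃ r' : ℝ, 0 < r' ∧ r' ≤ R ∧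
        ENNReal.ofReal a < ENNReal.ofReal r' * ν (ball x r') / μ (ball x r')} with hGdef
    -- basic facts about μ on balls
    have μpos : ∀ (x : X) (r : ℝ), 0 < r → 0 < μ (ball x r) := by
      intro x r hr
      have := (h x (r / 2) (by positivity)).1
      have he : 2 * (r / 2) = r := by ring
      rwa [he] at this
    have μfin : ∀ (x : X) (r : ℝ), 0 < r → μ (ball x r) < ⊤ := by
      intro x r hr
      have h2 := (h x r hr).2.2
      calc μ (ball x r) = 1 * μ (ball x r) := (one_mul _).symm
        _ ≤ C_d * μ (ball x r) := mul_le_mul_left hC_d _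
        _ < ⊤ := h2
    have μdouble : ∀ (x : X) (r : ℝ), 0 < r →
        μ (ball x (4 * r)) ≤ C_d ^ 2 * μ (ball x r) := by
      intro x r hr
      have h1 := (h x (2 * r) (by positivity)).2.1
      have h2 := (h x r hr).2.1
      have he : 2 * (2 * r) = 4 * r := by ring
      rw [he] at h1
      calc μ (ball x (4 * r)) ≤ C_d * μ (ball x (2 * r)) := h1
        _ ≤ C_d * (C_d * μ (ball x r)) := mul_le_mul_right h2 _
        _ = C_d ^ 2 * μ (ball x r) := by rw [pow_two, mul_assoc]
    -- choose radii
    have hch : ∀ x : X, ∃ r : ℝ, 0 < r ∧ r ≤ R ∧ (x ∈ G →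
        ENNReal.ofReal a < ENNReal.ofReal r * ν (ball x r) / μ (ball x r)) := by
      intro x
      by_cases hx : x ∈ G
      · obtain ⟨r, hr0, hrR, hrlt⟩ := hx
        exact ⟨r, hr0, hrR, fun _ => hrlt⟩
      · exact ⟨R, hR, le_refl _, fun hx' => absurd hx' hx⟩
    choose rad hrad0 hradR hradG using hch
    -- Vitali covering lemma
    obtain ⟨u, hut, hdisj, hcov⟩ :=
      Vitali.exists_disjoint_subfamily_covering_enlargement
        (fun x : X => closedBall x (rad x)) G rad 2 one_lt_two
        (fun x _ => (hrad0 x).le) R (fun x _ => hradR x)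
        (fun x _ => (nonempty_closedBall.2 (hrad0 x).le))
    -- key estimate on each ball of the family
    have key : ∀ b ∈ u, ENNReal.ofReal a * μ (ball b (rad b))
        < ENNReal.ofReal (rad b) * ν (ball b (rad b)) := by
      intro b hb
      have hlt' := hradG b (hut hb)
      exact (ENNReal.lt_div_iff_mul_lt
        (Or.inl (μpos b (rad b) (hrad0 b)).ne')
        (Or.inl (μfin b (rad b) (hrad0 b)).ne)).1 hlt'
    have νpos : ∀ b ∈ u, 0 < ν (ball b (rad b)) := by
      intro b hb
      by_contra hν
      push_neg at hν
      have hν0 : ν (ball b (rad b)) = 0 := le_antisymm hν (zero_le)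
      have := key b hb
      rw [hν0, mul_zero] at this
      exact absurd this (not_lt.2 (zero_le))
    -- countability of the disjoint family
    have hcount : u.Countable := by
      classical
      set As : X → Set X := fun x => if x ∈ u then closedBall x (rad x) else ∅ with hAs
      have As_mble : ∀ x, MeasurableSet (As x) := by
        intro x
        by_cases hx : x ∈ u <;> simp [hAs, hx, measurableSet_closedBall]
      have As_disj : Pairwise (Function.onFun Disjoint As) := by
        intro x y hxy
        show Disjoint (As x) (As y)
        by_cases hx : x ∈ u
        · by_cases hy : y ∈ u
          · simp only [hAs, if_pos hx, if_pos hy]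
            exact hdisj hx hy hxy
          · simp [hAs, hy]
        · simp [hAs, hx]
      have hsub : u ⊆ {x : X | 0 < ν (As x)} := by
        intro b hb
        have : ν (ball b (rad b)) ≤ ν (As b) := by
          simp only [hAs, hb, if_true]
          exact measure_mono ball_subset_closedBall
        exact lt_of_lt_of_le (νpos b hb) this
      exact (Measure.countable_meas_pos_of_disjoint_iUnion As_mble As_disj).mono hsub
    haveI : Countable ↥u := hcount.to_subtype
    -- the covering by enlarged balls
    have hcover : G ⊆ ⋃ b : u, ball (b : X) (4 * rad (b : X)) := by
      intro x hx
      obtain ⟨b, hb, ⟨y, hy⟩, hr2⟩ := hcov x hx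
      refine mem_iUnion.2 ⟨⟨b, hb⟩, ?_⟩
      have h1 : dist y x ≤ rad x := mem_closedBall.1 hy.1
      have h2 : dist y b ≤ rad b := mem_closedBall.1 hy.2
      have h3 : dist x b ≤ dist x y + dist y b := dist_triangle x y b
      rw [dist_comm] at h1
      have hb0 := hrad0 b
      exact mem_ball.2 (by simp only []; linarith)
    -- exhibit a member of the covering set
    set s₀ : ℝ≥0∞ := ∑' b : u, μ (ball (b : X) (4 * rad (b : X)))
        / ENNReal.ofReal (4 * rad (b : X)) with hs₀
    have hmem : s₀ ∈ {s : ℝ≥0∞ | ∃ (ι : Type) (_ : Countable ι) (c : ι → X) (r : ι → ℝ),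
        (∀ i, 0 < r i ∧ r i ≤ 5 * R) ∧
        {x : X | ∃ r' : ℝ, 0 < r' ∧ r' ≤ R ∧
            ENNReal.ofReal a < ENNReal.ofReal r' * ν (ball x r') / μ (ball x r')}
          ⊆ ⋃ i, ball (c i) (r i) ∧
        s = ∑' i, μ (ball (c i) (r i)) / ENNReal.ofReal (r i)} := by
      refine ⟨↥u, inferInstance, fun b => (b : X), fun b => 4 * rad (b : X), ?_, ?_, rfl⟩
      · intro b
        constructor
        · show (0:ℝ) < 4 * rad (b : X)
          have := hrad0 (b : X); linarith
        · show 4 * rad (b : X) ≤ 5 * R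
          have := hradR (b : X); linarith
      · exact hcover
    refine le_trans (sInf_le hmem) ?_
    -- estimate each term
    have hterm : ∀ b : u, μ (ball (b : X) (4 * rad (b : X)))
        / ENNReal.ofReal (4 * rad (b : X))
        ≤ C_d ^ 2 / ENNReal.ofReal a * ν (ball (b : X) (rad (b : X))) := by
      intro b
      set r := rad (b : X) with hr
      have hr0 := hrad0 (b : X)
      have hr0' : ENNReal.ofReal r ≠ 0 := (ENNReal.ofReal_pos.2 hr0).ne'
      have ha0' : ENNReal.ofReal a ≠ 0 := (ENNReal.ofReal_pos.2 ha).ne'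
      have step1 : μ (ball (b : X) (4 * r)) / ENNReal.ofReal (4 * r)
          ≤ C_d ^ 2 * μ (ball (b : X) r) / ENNReal.ofReal r :=
        ENNReal.div_le_div (μdouble (b : X) r hr0)
          (ENNReal.ofReal_le_ofReal (by linarith))
      have step2 : μ (ball (b : X) r) / ENNReal.ofReal r
          ≤ ν (ball (b : X) r) / ENNReal.ofReal a := by
        rw [ENNReal.le_div_iff_mul_le (Or.inl ha0') (Or.inl ENNReal.ofReal_ne_top)]
        calc μ (ball (b : X) r) / ENNReal.ofReal r * ENNReal.ofReal a
            = ENNReal.ofReal a * μ (ball (b : X) r) / ENNReal.ofReal r := by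
              simp only [div_eq_mul_inv]; ring
          _ ≤ ENNReal.ofReal r * ν (ball (b : X) r) / ENNReal.ofReal r :=
              ENNReal.div_le_div_right (key (b : X) b.2).le _
          _ = ν (ball (b : X) r) * (ENNReal.ofReal r / ENNReal.ofReal r) := by
              rw [mul_comm, mul_div_assoc]
          _ = ν (ball (b : X) r) := by
              rw [ENNReal.div_self hr0' ENNReal.ofReal_ne_top, mul_one]
      calc μ (ball (b : X) (4 * r)) / ENNReal.ofReal (4 * r)
          ≤ C_d ^ 2 * μ (ball (b : X) r) / ENNReal.ofReal r := step1
        _ = C_d ^ 2 * (μ (ball (b : X) r) / ENNReal.ofReal r) := by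
            rw [mul_div_assoc]
        _ ≤ C_d ^ 2 * (ν (ball (b : X) r) / ENNReal.ofReal a) :=
            mul_le_mul_right step2 _
        _ = C_d ^ 2 / ENNReal.ofReal a * ν (ball (b : X) r) := by
            simp only [div_eq_mul_inv]; ring
    -- sum up
    have hdisj' : Pairwise (Function.onFun Disjoint fun b : u => ball (b : X) (rad (b : X))) := by
      intro b b' hbb'
      have hne : (b : X) ≠ (b' : X) := fun hh => hbb' (Subtype.ext hh)
      exact (hdisj b.2 b'.2 hne).mono ball_subset_closedBall ball_subset_closedBall
    have hsum : (∑' b : u, ν (ball (b : X) (rad (b : X)))) ≤ ν Set.univ := by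
      rw [← measure_iUnion hdisj' (fun b => measurableSet_ball)]
      exact measure_mono (subset_univ _)
    calc s₀ ≤ ∑' b : u, C_d ^ 2 / ENNReal.ofReal a * ν (ball (b : X) (rad (b : X))) :=
          ENNReal.tsum_le_tsum hterm
      _ = C_d ^ 2 / ENNReal.ofReal a * ∑' b : u, ν (ball (b : X) (rad (b : X))) :=
          ENNReal.tsum_mul_left
      _ ≤ C_d ^ 2 / ENNReal.ofReal a * ν Set.univ := mul_le_mul_right hsum _
      _ = C_d ^ 2 * ν Set.univ / ENNReal.ofReal a := by
          simp only [div_eq_mul_inv]; ring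
end

section
/- Let (X,d) be a metric space and let μ be a doubling Borel measure on X. Let u : X → ℝ be a Borel measurable function. Then the upper approximate limit u^∨ : X → [−∞,∞] and the lower approximate limit u^∧ : X → [−∞,∞] are Borel measurable functions. -/
open MeasureTheory Metric Filter Set Topology
open scoped ENNReal NNReal

section Aux

variable {X : Type*} [MetricSpace X] [MeasurableSpace X]

/-- Measures of slightly smaller balls (intersected with `A`) tend to the measure of the ball. -/
lemma tendsto_measure_ball_inter_aux (μ : Measure X) (A : Set X) (x : X) (r : ℝ) (hr : 0 < r) :
    Tendsto (fun n : ℕ => μ (ball x (r - r / (n + 2)) ∩ A)) atTop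
      (𝓝 (μ (ball x r ∩ A))) := by
  have hmono : Monotone (fun n : ℕ => ball x (r - r / (n + 2)) ∩ A) := by
    intro n m hnm
    refine inter_subset_inter_left _ (ball_subset_ball ?_)
    have h1 : (0:ℝ) < n + 2 := by positivity
    have h2 : (n:ℝ) + 2 ≤ (m:ℝ) + 2 := by exact_mod_cast by omega
    have := div_le_div_of_nonneg_left hr.le h1 (le_trans (le_refl _) h2)
    -- r / (m+2) ≤ r / (n+2)
    have h3 : r / ((m:ℝ) + 2) ≤ r / ((n:ℝ) + 2) :=
      div_le_div_of_nonneg_left hr.le h1 h2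
    linarith
  have hunion : (⋃ n : ℕ, ball x (r - r / (n + 2)) ∩ A) = ball x r ∩ A := by
    apply Subset.antisymm
    · refine iUnion_subset fun n => inter_subset_inter_left _ (ball_subset_ball ?_)
      have : 0 < r / ((n:ℝ) + 2) := by positivity
      linarith
    · rintro y ⟨hy, hyA⟩
      have hd : dist y x < r := mem_ball.1 hy
      have h1 : 0 < r - dist y x := by linarith
      obtain ⟨n, hn⟩ := exists_nat_gt (r / (r - dist y x))
      refine mem_iUnion.2 ⟨n, ⟨mem_ball.2 ?_, hyA⟩⟩
      have h2 : r / ((n:ℝ) + 2) < r - dist y x := by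
        rw [div_lt_iff₀ (by positivity)]
        have h3 : r < (n:ℝ) * (r - dist y x) := (div_lt_iff₀ h1).1 hn
        nlinarith
      linarith
  have := tendsto_measure_iUnion_atTop (μ := μ) hmono
  rwa [hunion] at this

/-- Lower semicontinuity of `x ↦ μ (ball x r ∩ A)`. -/
lemma lowerSemicontinuous_measure_ball_inter (μ : Measure X) (A : Set X) (r : ℝ) :
    LowerSemicontinuous (fun x => μ (ball x r ∩ A)) := by
  intro x c hc
  rcases le_or_gt r 0 with hr | hr
  · simp [ball_eq_empty.2 hr] at hc
  · have := (tendsto_measure_ball_inter_aux μ A x r hr).eventually_const_lt hc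
    obtain ⟨n, hn⟩ := this.exists
    have hε : 0 < r / ((n:ℝ) + 2) := by positivity
    filter_upwards [ball_mem_nhds x hε] with x' hx'
    refine hn.trans_le (measure_mono (inter_subset_inter_left _ ?_))
    intro y hy
    have h1 : dist y x < r - r / ((n:ℝ)+2) := mem_ball.1 hy
    have h2 : dist x x' < r / ((n:ℝ)+2) := by
      rw [dist_comm]; exact mem_ball.1 hx'
    exact mem_ball.2 (lt_of_le_of_lt (dist_triangle y x x') (by linarith))

lemma measure_ball_inter_le_of_rat (μ : Measure X) (A : Set X) (x : X) (r : ℝ) (hr : 0 < r)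
    (ε : ℝ≥0∞) (h : ∀ q : ℚ, 0 < (q:ℝ) → (q:ℝ) < r → μ (ball x q ∩ A) ≤ ε) :
    μ (ball x r ∩ A) ≤ ε := by
  refine le_of_tendsto' (tendsto_measure_ball_inter_aux μ A x r hr) fun n => ?_
  have h2 : r - r / ((n:ℝ) + 2) < r := by
    have : 0 < r / ((n:ℝ) + 2) := by positivity
    linarith
  obtain ⟨q, hq1, hq2⟩ := exists_rat_btwn h2
  have hq0 : 0 < (q:ℝ) := by
    have hhalf : r / ((n:ℝ) + 2) ≤ r / 2 := by
      apply div_le_div_of_nonneg_left hr.le (by norm_num)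
      have : (0:ℝ) ≤ n := Nat.cast_nonneg n
      linarith
    have : 0 < r - r / ((n:ℝ)+2) := by linarith
    linarith
  exact le_trans (measure_mono (inter_subset_inter_left _ (ball_subset_ball hq1.le)))
    (h q hq0 hq2)

/-- Characterization of the density-tendsto condition through rational radii. -/
lemma tendsto_iff_rat (μ : Measure X) (A : Set X) (x : X)
    (hball : ∀ s : ℝ, 0 < s → 0 < μ (ball x s) ∧ μ (ball x s) ≠ ⊤) :
    Tendsto (fun r : ℝ => μ (ball x r ∩ A) / μ (ball x r)) (𝓝[>] (0:ℝ)) (𝓝 0) ↔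
      ∀ n : ℕ, ∃ m : ℕ, ∀ q : ℚ, 0 < (q:ℝ) → (q:ℝ) < 1 / ((m:ℝ) + 1) →
        μ (ball x q ∩ A) / μ (ball x q) ≤ ((n:ℝ≥0∞) + 1)⁻¹ := by
  constructor
  · intro h n
    have hε : (0:ℝ≥0∞) < ((n:ℝ≥0∞) + 1)⁻¹ := by
      simp [ENNReal.inv_pos]
    have := (ENNReal.tendsto_nhds_zero.1 h) _ hε
    rw [eventually_nhdsWithin_iff] at this
    rw [Metric.eventually_nhds_iff] at this
    obtain ⟨δ, hδ, hδ'⟩ := this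
    obtain ⟨m, hm⟩ := exists_nat_one_div_lt hδ
    refine ⟨m, fun q hq0 hq1 => ?_⟩
    have : dist ((q:ℝ)) 0 < δ := by
      rw [Real.dist_eq, sub_zero, abs_of_pos hq0]
      exact hq1.trans hm
    exact hδ' this hq0
  · intro h
    rw [ENNReal.tendsto_nhds_zero]
    intro ε hε
    obtain ⟨n, hn⟩ := ENNReal.exists_inv_nat_lt hε.ne'
    have hn' : ((n:ℝ≥0∞) + 1)⁻¹ < ε := lt_of_le_of_lt (by
      apply ENNReal.inv_le_inv.2; exact le_self_add) hn
    obtain ⟨m, hm⟩ := h n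
    have hIoo : Ioo (0:ℝ) (1 / ((m:ℝ)+1)) ∈ 𝓝[>] (0:ℝ) :=
      Ioo_mem_nhdsGT_of_mem ⟨le_refl _, by positivity⟩
    filter_upwards [hIoo] with r hr
    obtain ⟨hr0, hr1⟩ := hr
    have key : μ (ball x r ∩ A) ≤ ((n:ℝ≥0∞) + 1)⁻¹ * μ (ball x r) := by
      apply measure_ball_inter_le_of_rat μ A x r hr0
      intro q hq0 hqr
      have hq := hm q hq0 (hqr.trans hr1)
      obtain ⟨hb0, hbt⟩ := hball q hq0
      have h5 : μ (ball x q ∩ A) ≤ ((n:ℝ≥0∞) + 1)⁻¹ * μ (ball x q) :=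
        (ENNReal.div_le_iff hb0.ne' hbt).1 hq
      exact h5.trans (mul_le_mul_right (measure_mono (ball_subset_ball hqr.le)) _)
    obtain ⟨hb0, hbt⟩ := hball r hr0
    calc μ (ball x r ∩ A) / μ (ball x r) ≤ ((n:ℝ≥0∞)+1)⁻¹ * μ (ball x r) / μ (ball x r) :=
        ENNReal.div_le_div_right key _
    _ = ((n:ℝ≥0∞)+1)⁻¹ := by
        rw [mul_div_assoc, ENNReal.div_self hb0.ne' hbt, mul_one]
    _ ≤ ε := hn'.le


lemma measurableSet_tendsto_density [BorelSpace X] (μ : Measure X) (A : Set X)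
    (hball : ∀ (x : X) (s : ℝ), 0 < s → 0 < μ (ball x s) ∧ μ (ball x s) ≠ ⊤) :
    MeasurableSet {x : X |
      Tendsto (fun r : ℝ => μ (ball x r ∩ A) / μ (ball x r)) (𝓝[>] (0:ℝ)) (𝓝 0)} := by
  have heq : {x : X |
        Tendsto (fun r : ℝ => μ (ball x r ∩ A) / μ (ball x r)) (𝓝[>] (0:ℝ)) (𝓝 0)} =
      ⋂ n : ℕ, ⋃ m : ℕ, ⋂ q : ℚ, ⋂ (_ : 0 < (q:ℝ) ∧ (q:ℝ) < 1 / ((m:ℝ) + 1)),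
        {x : X | μ (ball x (q:ℝ) ∩ A) / μ (ball x (q:ℝ)) ≤ ((n:ℝ≥0∞) + 1)⁻¹} := by
    ext x
    rw [mem_setOf_eq, tendsto_iff_rat μ A x (hball x)]
    simp only [mem_iInter, mem_iUnion, mem_setOf_eq, and_imp]
  rw [heq]
  refine MeasurableSet.iInter fun n => MeasurableSet.iUnion fun m =>
    MeasurableSet.iInter fun q => MeasurableSet.iInter fun _ => ?_
  have h1 : Measurable fun x : X => μ (ball x (q:ℝ) ∩ A) :=
    (lowerSemicontinuous_measure_ball_inter μ A (q:ℝ)).measurable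
  have h2 : Measurable fun x : X => μ (ball x (q:ℝ)) := by
    have := (lowerSemicontinuous_measure_ball_inter μ univ (q:ℝ)).measurable
    simpa [inter_univ] using this
  exact measurableSet_le (h1.div h2) measurable_const

end Aux

/-- The upper approximate limit `u^∨(x)` of `u` at `x`, with respect to the measure `μ`. -/
noncomputable def upperApproxLimit {X : Type*} [MetricSpace X] [MeasurableSpace X]
    (μ : Measure X) (u : X → ℝ) (x : X) : EReal :=
  sInf {t : EReal |
    Tendsto (fun r : ℝ => μ (ball x r ∩ {y | t < (u y : EReal)}) / μ (ball x r))
      (𝓝[>] (0 : ℝ)) (𝓝 0)}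

/-- The lower approximate limit `u^∧(x)` of `u` at `x`, with respect to the measure `μ`. -/
noncomputable def lowerApproxLimit {X : Type*} [MetricSpace X] [MeasurableSpace X]
    (μ : Measure X) (u : X → ℝ) (x : X) : EReal :=
  sSup {t : EReal |
    Tendsto (fun r : ℝ => μ (ball x r ∩ {y | (u y : EReal) < t}) / μ (ball x r))
      (𝓝[>] (0 : ℝ)) (𝓝 0)}

/-- If `μ` is a doubling Borel measure on a metric space and `u` is Borel
measurable, then the upper and lower approximate limits `u^∨, u^∧ : X → [-∞,∞]` are Borel
measurable functions. -/
theorem measurable_upperApproxLimit_and_lowerApproxLimit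
    {X : Type*} [MetricSpace X] [MeasurableSpace X] [BorelSpace X]
    (μ : Measure X) (C_d : ℝ≥0∞) (hC_d : 1 ≤ C_d)
    (hdoub : ∀ (x : X) (r : ℝ), 0 < r →
      0 < μ (ball x (2 * r)) ∧ μ (ball x (2 * r)) ≤ C_d * μ (ball x r) ∧
        C_d * μ (ball x r) < ⊤)
    (u : X → ℝ) (hu : Measurable u) :
    Measurable (fun x => upperApproxLimit μ u x) ∧
    Measurable (fun x => lowerApproxLimit μ u x) := by
  have hball : ∀ (x : X) (s : ℝ), 0 < s → 0 < μ (ball x s) ∧ μ (ball x s) ≠ ⊤ := by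
    intro x s hs
    constructor
    · have := (hdoub x (s/2) (by linarith)).1
      rwa [show 2 * (s/2) = s by ring] at this
    · have h1 : μ (ball x s) ≤ C_d * μ (ball x s) :=
        le_mul_of_one_le_left zero_le hC_d
      exact (h1.trans_lt (hdoub x s hs).2.2).ne
  constructor
  · apply measurable_of_Iio
    intro c
    have heq : (fun x => upperApproxLimit μ u x) ⁻¹' Iio c =
        ⋃ q : ℚ, ⋃ (_ : (((q:ℝ):EReal)) < c), {x : X |
          Tendsto (fun r : ℝ => μ (ball x r ∩ {y | (q:ℝ) < u y}) / μ (ball x r))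
            (𝓝[>] (0:ℝ)) (𝓝 0)} := by
      ext x
      simp only [mem_preimage, mem_Iio, mem_iUnion, mem_setOf_eq]
      have hAq : ∀ q : ℚ, {y : X | (((q:ℝ):EReal)) < (u y : EReal)} = {y | (q:ℝ) < u y} := by
        intro q; ext y; simp [EReal.coe_lt_coe_iff]
      constructor
      · intro hx
        rw [upperApproxLimit, sInf_lt_iff] at hx
        obtain ⟨t, ht, htc⟩ := hx
        obtain ⟨q, hq1, hq2⟩ := EReal.exists_rat_btwn_of_lt htc
        refine ⟨q, hq2, ?_⟩
        rw [← hAq q]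
        exact tendsto_of_tendsto_of_tendsto_of_le_of_le tendsto_const_nhds ht
          (fun r => zero_le)
          (fun r => ENNReal.div_le_div_right (measure_mono (inter_subset_inter_right _
            (fun y hy => hq1.trans hy))) _)
      · intro hx
        obtain ⟨q, hq, hten⟩ := hx
        rw [upperApproxLimit]
        apply lt_of_le_of_lt (sInf_le ?_) hq
        rw [mem_setOf_eq, hAq q]
        exact hten
    rw [heq]
    exact MeasurableSet.iUnion fun q => MeasurableSet.iUnion fun _ =>
      measurableSet_tendsto_density μ _ hball
  · apply measurable_of_Ioi
    intro c
    have heq : (fun x => lowerApproxLimit μ u x) ⁻¹' Ioi c =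
        ⋃ q : ℚ, ⋃ (_ : c < (((q:ℝ):EReal))), {x : X |
          Tendsto (fun r : ℝ => μ (ball x r ∩ {y | u y < (q:ℝ)}) / μ (ball x r))
            (𝓝[>] (0:ℝ)) (𝓝 0)} := by
      ext x
      simp only [mem_preimage, mem_Ioi, mem_iUnion, mem_setOf_eq]
      have hAq : ∀ q : ℚ, {y : X | (u y : EReal) < (((q:ℝ):EReal))} = {y | u y < (q:ℝ)} := by
        intro q; ext y; simp [EReal.coe_lt_coe_iff]
      constructor
      · intro hx
        rw [lowerApproxLimit, lt_sSup_iff] at hx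
        obtain ⟨t, ht, htc⟩ := hx
        obtain ⟨q, hq1, hq2⟩ := EReal.exists_rat_btwn_of_lt htc
        refine ⟨q, hq1, ?_⟩
        rw [← hAq q]
        exact tendsto_of_tendsto_of_tendsto_of_le_of_le tendsto_const_nhds ht
          (fun r => zero_le)
          (fun r => ENNReal.div_le_div_right (measure_mono (inter_subset_inter_right _
            (fun y hy => hy.trans hq2))) _)
      · intro hx
        obtain ⟨q, hq, hten⟩ := hx
        rw [lowerApproxLimit]
        apply lt_of_lt_of_le hq (le_sSup ?_)
        rw [mem_setOf_eq, hAq q]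
        exact hten
    rw [heq]
    exact MeasurableSet.iUnion fun q => MeasurableSet.iUnion fun _ =>
      measurableSet_tendsto_density μ _ hball
end

section
/- Let X := { (x₁,x₂) ∈ ℝ² : x₁ = 0 or x₂ = 0 } with the Euclidean metric and let μ be the restriction to X of the 1-dimensional Hausdorff measure. Then for every R > 0, inf{ Σ_i μ(B(x_i,r_i))/r_i : {0} ⊆ ⋃_i B(x_i,r_i), 0 < r_i ≤ R } = 2, where the balls are metric balls in X and 0 denotes the origin. In particular, the codimension-1 Hausdorff measure (with respect to μ) of the singleton {0} equals 2. -/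
open MeasureTheory Metric Filter Set Topology
open scoped ENNReal NNReal

noncomputable def fX (x : ℝ) : EuclideanSpace ℝ (Fin 2) :=
  (WithLp.equiv 2 (Fin 2 → ℝ)).symm ![x, 0]

noncomputable def fY (y : ℝ) : EuclideanSpace ℝ (Fin 2) :=
  (WithLp.equiv 2 (Fin 2 → ℝ)).symm ![0, y]

@[simp] lemma fX_apply0 (x : ℝ) : fX x 0 = x := rfl
@[simp] lemma fX_apply1 (x : ℝ) : fX x 1 = 0 := rfl
@[simp] lemma fY_apply0 (y : ℝ) : fY y 0 = 0 := rfl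
@[simp] lemma fY_apply1 (y : ℝ) : fY y 1 = y := rfl

lemma dist_fX (x : ℝ) (p : EuclideanSpace ℝ (Fin 2)) :
    dist (fX x) p = Real.sqrt ((x - p 0)^2 + (0 - p 1)^2) := by
  rw [EuclideanSpace.dist_eq, Fin.sum_univ_two]
  simp [Real.dist_eq, sq_abs]

lemma dist_fY (y : ℝ) (p : EuclideanSpace ℝ (Fin 2)) :
    dist (fY y) p = Real.sqrt ((0 - p 0)^2 + (y - p 1)^2) := by
  rw [EuclideanSpace.dist_eq, Fin.sum_univ_two]
  simp [Real.dist_eq, sq_abs]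

lemma isometry_fX : Isometry fX := by
  refine Isometry.of_dist_eq fun x y => ?_
  rw [dist_fX]
  simp [Real.dist_eq, Real.sqrt_sq_eq_abs]

lemma isometry_fY : Isometry fY := by
  refine Isometry.of_dist_eq fun x y => ?_
  rw [dist_fY]
  simp [Real.dist_eq, Real.sqrt_sq_eq_abs]

lemma hausdorff_fX (s : Set ℝ) : μH[1] (fX '' s) = volume s := by
  rw [isometry_fX.hausdorffMeasure_image (Or.inl zero_le_one), hausdorffMeasure_real]

lemma hausdorff_fY (s : Set ℝ) : μH[1] (fY '' s) = volume s := by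
  rw [isometry_fY.hausdorffMeasure_image (Or.inl zero_le_one), hausdorffMeasure_real]

/-- The union of the two coordinate axes in the Euclidean plane. -/
def coordAxes : Set (EuclideanSpace ℝ (Fin 2)) := {p | p 0 = 0 ∨ p 1 = 0}

/-- The restriction to the coordinate axes of the 1-dimensional Hausdorff measure. -/
noncomputable def axesMeasure : Measure (EuclideanSpace ℝ (Fin 2)) :=
  (Measure.hausdorffMeasure 1).restrict coordAxes

lemma axesMeasure_ball (c : EuclideanSpace ℝ (Fin 2)) (r : ℝ) :
    axesMeasure (ball c r) = μH[1] (ball c r ∩ coordAxes) := by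
  rw [axesMeasure, Measure.restrict_apply measurableSet_ball]

lemma lower_bd {c : EuclideanSpace ℝ (Fin 2)} (hc : c ∈ coordAxes) {r : ℝ} (hr : 0 < r) :
    ENNReal.ofReal (2 * r) ≤ axesMeasure (ball c r) := by
  rw [axesMeasure_ball]
  rcases hc with h0 | h1
  · -- c is on the y-axis, use fY
    have hsub : fY '' Ioo (c 1 - r) (c 1 + r) ⊆ ball c r ∩ coordAxes := by
      rintro _ ⟨y, hy, rfl⟩
      refine ⟨?_, Or.inl rfl⟩
      rw [mem_ball, dist_fY, h0]
      have : (0 - (0:ℝ))^2 + (y - c 1)^2 < r^2 := by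
        obtain ⟨hy1, hy2⟩ := hy
        nlinarith
      calc Real.sqrt ((0 - (0:ℝ))^2 + (y - c 1)^2) < Real.sqrt (r^2) := by
            apply Real.sqrt_lt_sqrt (by positivity) this
        _ = r := Real.sqrt_sq hr.le
    calc ENNReal.ofReal (2 * r) = μH[1] (fY '' Ioo (c 1 - r) (c 1 + r)) := by
          rw [hausdorff_fY, Real.volume_Ioo]; ring_nf
      _ ≤ _ := measure_mono hsub
  · have hsub : fX '' Ioo (c 0 - r) (c 0 + r) ⊆ ball c r ∩ coordAxes := by
      rintro _ ⟨x, hx, rfl⟩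
      refine ⟨?_, Or.inr rfl⟩
      rw [mem_ball, dist_fX, h1]
      have : (x - c 0)^2 + (0 - (0:ℝ))^2 < r^2 := by
        obtain ⟨hx1, hx2⟩ := hx
        nlinarith
      calc Real.sqrt ((x - c 0)^2 + (0 - (0:ℝ))^2) < Real.sqrt (r^2) := by
            apply Real.sqrt_lt_sqrt (by positivity) this
        _ = r := Real.sqrt_sq hr.le
    calc ENNReal.ofReal (2 * r) = μH[1] (fX '' Ioo (c 0 - r) (c 0 + r)) := by
          rw [hausdorff_fX, Real.volume_Ioo]; ring_nf
      _ ≤ _ := measure_mono hsub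

lemma upper_bd {t r : ℝ} (ht : 0 ≤ t) (htr : t < r) :
    axesMeasure (ball (fX t) r) ≤
      ENNReal.ofReal (2 * r) + ENNReal.ofReal (2 * Real.sqrt (r ^ 2 - t ^ 2)) := by
  have hr : 0 < r := lt_of_le_of_lt ht htr
  set s := Real.sqrt (r ^ 2 - t ^ 2) with hs
  have hs0 : 0 ≤ s := Real.sqrt_nonneg _
  have hs2 : s ^ 2 = r ^ 2 - t ^ 2 := Real.sq_sqrt (by nlinarith)
  rw [axesMeasure_ball]
  have hsub : ball (fX t) r ∩ coordAxes ⊆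
      fX '' Icc (t - r) (t + r) ∪ fY '' Icc (-s) s := by
    rintro p ⟨hpb, hpa⟩
    rw [mem_ball, dist_comm, dist_fX] at hpb
    have hsq : (t - p 0) ^ 2 + (0 - p 1) ^ 2 < r ^ 2 := by
      have := (Real.sqrt_lt' hr).mp hpb
      linarith
    rcases hpa with h0 | h1
    · right
      have hp : p = fY (p 1) := by
        ext i
        fin_cases i
        · exact h0
        · exact rfl
      rw [hp]
      refine mem_image_of_mem _ ?_
      rw [h0] at hsq
      constructor <;> nlinarith
    · left
      have hp : p = fX (p 0) := by
        ext i
        fin_cases i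
        · exact rfl
        · exact h1
      rw [hp]
      refine mem_image_of_mem _ ?_
      rw [h1] at hsq
      constructor <;> nlinarith
  calc μH[1] (ball (fX t) r ∩ coordAxes)
      ≤ μH[1] (fX '' Icc (t - r) (t + r) ∪ fY '' Icc (-s) s) := measure_mono hsub
    _ ≤ μH[1] (fX '' Icc (t - r) (t + r)) + μH[1] (fY '' Icc (-s) s) := measure_union_le _ _
    _ = ENNReal.ofReal (2 * r) + ENNReal.ofReal (2 * s) := by
        rw [hausdorff_fX, hausdorff_fY, Real.volume_Icc, Real.volume_Icc]
        ring_nf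

/-- On the union of the coordinate axes with the restricted 1-dimensional
Hausdorff measure, the codimension-1 Hausdorff content of the singleton `{0}` equals `2` at
every scale `R > 0`; in particular the codimension-1 Hausdorff measure of `{0}` is `2`. -/
theorem codimension_one_content_origin (R : ℝ) (hR : 0 < R) :
    sInf {s : ℝ≥0∞ | ∃ (ι : Type) (_ : Countable ι)
        (c : ι → EuclideanSpace ℝ (Fin 2)) (r : ι → ℝ),
      (∀ i, c i ∈ coordAxes ∧ 0 < r i ∧ r i ≤ R) ∧
      ({(0 : EuclideanSpace ℝ (Fin 2))} : Set (EuclideanSpace ℝ (Fin 2)))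
        ⊆ ⋃ i, ball (c i) (r i) ∧
      s = ∑' i, axesMeasure (ball (c i) (r i)) / ENNReal.ofReal (r i)} = 2 := by
  apply le_antisymm
  · -- upper bound: sInf ≤ 2
    refine ENNReal.le_of_forall_pos_le_add fun ε hε _ => ?_
    set e : ℝ := min (ε : ℝ) 1 with he
    have he0 : 0 < e := lt_min (by exact_mod_cast hε) one_pos
    have he1 : e ≤ 1 := min_le_right _ _
    have heε : e ≤ (ε : ℝ) := min_le_left _ _
    set s : ℝ := R / 2 * e with hsdef
    have hs0 : 0 < s := by positivity
    have hsR : s < R := by nlinarith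
    set t : ℝ := Real.sqrt (R ^ 2 - s ^ 2) with htdef
    have ht0 : 0 ≤ t := Real.sqrt_nonneg _
    have ht2 : t ^ 2 = R ^ 2 - s ^ 2 := Real.sq_sqrt (by nlinarith)
    have htR : t < R := (Real.sqrt_lt' hR).mpr (by nlinarith)
    have hst : Real.sqrt (R ^ 2 - t ^ 2) = s := by
      rw [show R ^ 2 - t ^ 2 = s ^ 2 by linarith, Real.sqrt_sq hs0.le]
    have hmem : (∑' _ : Unit, axesMeasure (ball (fX t) R) / ENNReal.ofReal R) ∈
        {s : ℝ≥0∞ | ∃ (ι : Type) (_ : Countable ι)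
            (c : ι → EuclideanSpace ℝ (Fin 2)) (r : ι → ℝ),
          (∀ i, c i ∈ coordAxes ∧ 0 < r i ∧ r i ≤ R) ∧
          ({(0 : EuclideanSpace ℝ (Fin 2))} : Set (EuclideanSpace ℝ (Fin 2)))
            ⊆ ⋃ i, ball (c i) (r i) ∧
          s = ∑' i, axesMeasure (ball (c i) (r i)) / ENNReal.ofReal (r i)} := by
      refine ⟨Unit, inferInstance, fun _ => fX t, fun _ => R,
        fun _ => ⟨Or.inr rfl, hR, le_refl R⟩, ?_, rfl⟩
      intro p hp
      rw [mem_singleton_iff] at hp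
      subst hp
      refine mem_iUnion.mpr ⟨(), ?_⟩
      rw [mem_ball, dist_comm, dist_fX]
      have h0 : ((0 : EuclideanSpace ℝ (Fin 2)) 0) = 0 := rfl
      have h1 : ((0 : EuclideanSpace ℝ (Fin 2)) 1) = 0 := rfl
      rw [h0, h1]
      simpa [Real.sqrt_sq_eq_abs, abs_of_nonneg ht0] using htR
    refine le_trans (sInf_le hmem) ?_
    rw [tsum_eq_single () (fun b hb => (hb (Subsingleton.elim b ())).elim)]
    have hub := upper_bd ht0 htR
    rw [hst] at hub
    calc axesMeasure (ball (fX t) R) / ENNReal.ofReal R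
        ≤ (ENNReal.ofReal (2 * R) + ENNReal.ofReal (2 * s)) / ENNReal.ofReal R :=
          ENNReal.div_le_div_right hub _
      _ = ENNReal.ofReal ((2 * R + 2 * s) / R) := by
          rw [← ENNReal.ofReal_add (by positivity) (by positivity),
            ENNReal.ofReal_div_of_pos hR]
      _ ≤ ENNReal.ofReal (2 + (ε : ℝ)) := by
          apply ENNReal.ofReal_le_ofReal
          rw [show (2 * R + 2 * s) / R = 2 + e by field_simp [hsdef]; ring]
          linarith
      _ = 2 + (ε : ℝ≥0∞) := by
          rw [ENNReal.ofReal_add (by norm_num) ε.coe_nonneg]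
          norm_num
  · -- lower bound: 2 ≤ sInf
    refine le_sInf fun x hx => ?_
    obtain ⟨ι, _, c, r, hcr, hcov, rfl⟩ := hx
    obtain ⟨i, hi⟩ := mem_iUnion.mp (hcov (mem_singleton _))
    refine le_trans ?_ (ENNReal.le_tsum i)
    have h2r := lower_bd (hcr i).1 (hcr i).2.1
    calc (2 : ℝ≥0∞) = ENNReal.ofReal (2 * r i) / ENNReal.ofReal (r i) := by
          rw [← ENNReal.ofReal_div_of_pos (hcr i).2.1, mul_div_assoc,
            div_self (ne_of_gt (hcr i).2.1), mul_one]
          norm_num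
      _ ≤ _ := ENNReal.div_le_div_right h2r _
end
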